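/- arXiv:1802.07760 — 4 statements merged into one kernel-verified Lean document; each statement's English description precedes it below -/
import Mathlib

section
/- Cayley identity for the determinant: for every positive integer n and every natural number s, one has det(∂X)·(det X)^{s+1} = (∏_{i=1}^{n}(s+i))·(det X)^{s} in the polynomial ring ℚ[x_{ij}]. -/
open MvPolynomial

/-- The partial-derivative operator `∂_{ij}` as a linear endomorphism of
`ℚ[x_{ij} : 1 ≤ i,j ≤ n]`. -/
noncomputable def pd0 {n : ℕ} (v : Fin n × Fin n) :
    Module.End ℚ (MvPolynomial (Fin n × Fin n) ℚ) :=
  (pderiv v).toLinearMap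

/-- The operator `det(∂X) = Σ_{σ ∈ S_n} sgn(σ) ∏_i ∂_{i,σ(i)}` (the operators
`∂_{i,σ(i)}` pairwise commute, so the order of composition is immaterial). -/
noncomputable def detOp0 (n : ℕ) : Module.End ℚ (MvPolynomial (Fin n × Fin n) ℚ) :=
  ∑ σ : Equiv.Perm (Fin n),
    (Equiv.Perm.sign σ : ℤ) • (List.ofFn fun i => pd0 (i, σ i)).prod

/-- The generic `n × n` matrix `X = (x_{ij})` over `ℚ[x_{ij}]`. -/
noncomputable def Xmat0 (n : ℕ) :
    Matrix (Fin n) (Fin n) (MvPolynomial (Fin n × Fin n) ℚ) :=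
  fun i j => X (i, j)

/-!
For a set `I` of rows and a column assignment `γ`, let `∂_{I,γ} = det (∂_{i, γ j})_{i,j ∈ I}` and
let `X_{I,γ}` be `X` with every row `i ∈ I` replaced by the unit row `e_{γ i}`, so that
`det X_{I,γ}` is, up to sign, a complementary minor of `X`. By induction on `I`,

  `∂_{I,γ} (det X)^(s+1) = (s+1)(s+2)⋯(s+|I|) · (det X)^s · det X_{I,γ}`.

Expanding `∂_{I,γ}` along a row `i ∈ I`, each `∂_{i j}` either hits the power of `det X`,
producing the cofactor `det (X with row i := e_j)`, or hits `det X_{I∖i, ·}`, which then acquires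
the unit row `e_j` in row `i`. The terms of the first kind recombine to `det X · det X_{I,γ}` by
the exchange identity `det A · det B = ∑ₜ det (A with row i := Bₜ) · det (B with row t := Aᵢ)`;
those of the second kind are `|I|` copies of `det X_{I,γ}` by antisymmetry in `γ`. The case
`I = univ`, `γ = id` is the theorem.
-/

open Matrix Finset Equiv Equiv.Perm

theorem Derivation.leibniz_prod {R A M ι : Type*} [CommSemiring R] [CommSemiring A] [Algebra R A]
    [AddCommMonoid M] [Module A M] [Module R M] [DecidableEq ι] (D : Derivation R A M)
    (s : Finset ι) (f : ι → A) :
    D (∏ i ∈ s, f i) = ∑ i ∈ s, (∏ j ∈ s.erase i, f j) • D (f i) := by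
  induction s using Finset.induction_on with
  | empty => simp
  | insert a s ha ih =>
    rw [prod_insert ha, D.leibniz, ih, sum_insert ha, erase_insert ha, smul_sum, add_comm]
    congr 1
    refine sum_congr rfl fun i hi => ?_
    rw [erase_insert_of_ne (ne_of_mem_of_not_mem hi ha).symm,
      prod_insert fun h => ha (mem_of_mem_erase h), mul_smul]

theorem Matrix.det_eq_sum_sign_smul_prod {R n : Type*} [CommRing R] [Fintype n] [DecidableEq n]
    (M : Matrix n n R) : M.det = ∑ σ : Perm n, (sign σ : ℤ) • ∏ i, M i (σ i) := by
  rw [← det_transpose, det_apply]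
  rfl

theorem Derivation.map_det {R A n : Type*} [CommRing R] [CommRing A] [Algebra R A] [Fintype n]
    [DecidableEq n] (D : Derivation R A A) (M : Matrix n n A) :
    D M.det = ∑ i, (M.updateRow i fun j => D (M i j)).det := by
  have hrow : ∀ (k : n) (σ : Perm n), ∏ i, (M.updateRow k fun j => D (M k j)) i (σ i)
      = (∏ i ∈ univ.erase k, M i (σ i)) * D (M k (σ k)) := by
    intro k σ
    rw [← prod_erase_mul _ _ (mem_univ k), updateRow_self]
    congr 1
    exact prod_congr rfl fun i hi => by rw [updateRow_ne (ne_of_mem_erase hi)]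
  simp only [det_eq_sum_sign_smul_prod, hrow, map_sum, map_zsmul, D.leibniz_prod, smul_eq_mul,
    smul_sum]
  exact sum_comm

theorem Matrix.det_mul_det_eq_sum_det_updateRow {R n : Type*} [CommRing R] [Fintype n]
    [DecidableEq n] (A B : Matrix n n R) (i : n) :
    A.det * B.det = ∑ t, (A.updateRow i (B t)).det * (B.updateRow t (A i)).det := by
  have hcramer : ∑ t, (B.updateRow t (A i)).det • B t = B.det • A i := by
    ext j
    simpa [mulVec, dotProduct, cramer_transpose_apply, mul_comm] using
      congrFun (mulVec_cramer Bᵀ (A i)) j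
  calc A.det * B.det = (A.updateRow i (B.det • A i)).det := by
        rw [det_updateRow_smul, updateRow_eq_self, mul_comm]
    _ = ∑ t, (A.updateRow i ((B.updateRow t (A i)).det • B t)).det := by
        rw [← hcramer]
        exact detRowAlternating.map_update_sum _ _ _ _
    _ = _ := by simp_rw [det_updateRow_smul, mul_comm]

namespace MvPolynomial

variable {R σ : Type*} [CommSemiring R]

theorem pderiv_comm (i j : σ) (p : MvPolynomial σ R) :
    pderiv i (pderiv j p) = pderiv j (pderiv i p) := by
  classical
  ext m
  simp only [coeff_pderiv, add_right_comm m]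
  rcases eq_or_ne i j with rfl | hij
  · rfl
  · simp [hij, hij.symm]
    ring

theorem commute_pderiv (i j : σ) :
    Commute (pderiv i : Derivation R (MvPolynomial σ R) _).toLinearMap (pderiv j).toLinearMap :=
  LinearMap.ext (pderiv_comm i j)

variable (R) {ι : Type*}

noncomputable def pderivProd (s : Finset ι) (v : ι → σ) : Module.End R (MvPolynomial σ R) :=
  s.noncommProd (fun i => (pderiv (v i)).toLinearMap) fun _ _ _ _ _ => commute_pderiv _ _

theorem pderivProd_insert [DecidableEq ι] {s : Finset ι} {i : ι} (hi : i ∉ s) (v : ι → σ) :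
    pderivProd R (insert i s) v = (pderiv (v i)).toLinearMap * pderivProd R s v :=
  noncommProd_insert_of_notMem _ _ _ _ hi

end MvPolynomial

namespace Cayley

variable {α : Type*} [DecidableEq α]

section UnitRows

variable {K : Type*} [CommRing K]

def unitRows (M : Matrix α α K) (S : Finset α) (γ : α → α) : Matrix α α K :=
  of fun i j => if i ∈ S then (Pi.single (γ i) 1 : α → K) j else M i j

variable {M : Matrix α α K} {S : Finset α} (γ : α → α)

theorem unitRows_row_of_mem {i : α} (hi : i ∈ S) : unitRows M S γ i = Pi.single (γ i) 1 := by
  ext j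
  simp [unitRows, hi]

theorem unitRows_row_of_notMem {i : α} (hi : i ∉ S) : unitRows M S γ i = M i := by
  ext j
  simp [unitRows, hi]

variable (M)

theorem unitRows_empty : unitRows M ∅ γ = M := by
  ext
  simp [unitRows]

theorem unitRows_univ_id [Fintype α] : unitRows M univ id = (1 : Matrix α α K) := by
  ext i j
  rw [Matrix.one_apply]
  simp [unitRows, Pi.single_apply, eq_comm]

theorem updateRow_unitRows_single {i : α} (hi : i ∉ S) (j : α) :
    (unitRows M S γ).updateRow i (Pi.single j 1) =
      unitRows M (insert i S) (Function.update γ i j) := by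
  ext k l
  by_cases hk : k = i
  · subst hk
    simp [unitRows]
  · simp [unitRows, hk]

end UnitRows

variable [Fintype α]

def permsOn (I : Finset α) : Finset (Perm α) := {π | ∀ i ∉ I, π i = i}

theorem mem_permsOn {I : Finset α} {π : Perm α} : π ∈ permsOn I ↔ ∀ i ∉ I, π i = i := by
  simp [permsOn]

theorem apply_mem_of_mem_permsOn {I : Finset α} {π : Perm α} (hπ : π ∈ permsOn I) {i : α}
    (hi : i ∈ I) : π i ∈ I := by
  by_contra h
  rw [π.injective (mem_permsOn.1 hπ _ h)] at h
  exact h hi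

theorem permsOn_empty : permsOn (∅ : Finset α) = {1} := by
  ext π
  simp [mem_permsOn, Equiv.ext_iff]

theorem permsOn_univ : permsOn (univ : Finset α) = univ := by
  ext π
  simp [mem_permsOn]

theorem swap_mem_permsOn {S : Finset α} {i t : α} (hi : i ∈ S) (ht : t ∈ S) :
    swap i t ∈ permsOn S :=
  mem_permsOn.2 fun _ hj =>
    swap_apply_of_ne_of_ne (ne_of_mem_of_not_mem hi hj).symm (ne_of_mem_of_not_mem ht hj).symm

theorem sum_permsOn_insert {M : Type*} [AddCommMonoid M] {I : Finset α} {i : α} (hi : i ∉ I)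
    (f : Perm α → M) :
    ∑ π ∈ permsOn (insert i I), f π = ∑ t ∈ insert i I, ∑ ρ ∈ permsOn I, f (swap i t * ρ) := by
  rw [← sum_product' (f := fun t ρ => f (swap i t * ρ))]
  refine sum_nbij' (fun π => (π i, swap i (π i) * π)) (fun p => swap i p.1 * p.2)
    (fun π hπ => ?_) (fun p hp => ?_) (fun π _ => by simp [swap_mul_self_mul]) (fun p hp => ?_)
    (fun π _ => by simp [swap_mul_self_mul])
  · refine mem_product.2 ⟨apply_mem_of_mem_permsOn hπ (mem_insert_self i I), ?_⟩
    refine mem_permsOn.2 fun j hj => ?_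
    rcases eq_or_ne j i with rfl | hji
    · exact swap_apply_right _ _
    · have hπj : π j = j := mem_permsOn.1 hπ j (by simp [hji, hj])
      rw [Perm.mul_apply, hπj, swap_apply_of_ne_of_ne hji]
      exact fun h => hji (π.injective (hπj.trans h))
  · obtain ⟨ht, hρ⟩ := mem_product.1 hp
    refine mem_permsOn.2 fun j hj => ?_
    rw [mem_insert, not_or] at hj
    rw [Perm.mul_apply, mem_permsOn.1 hρ j hj.2, swap_apply_of_ne_of_ne hj.1]
    rintro rfl
    exact (mem_insert.1 ht).elim hj.1 hj.2
  · have : (swap i p.1 * p.2) i = p.1 := by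
      simp [mem_permsOn.1 (mem_product.1 hp).2 i hi]
    simp [this, swap_mul_self_mul]

section UnitRowsDet

variable {K : Type*} [CommRing K] (M : Matrix α α K) {S : Finset α} (γ : α → α)

theorem unitRows_comp_perm {π : Perm α} (hπ : π ∈ permsOn S) :
    unitRows M S (γ ∘ π) = (unitRows M S γ).submatrix π id := by
  ext k l
  by_cases hk : k ∈ S
  · simp [unitRows, hk, apply_mem_of_mem_permsOn hπ hk]
  · simp [unitRows, hk, mem_permsOn.1 hπ k hk]

theorem det_unitRows_comp_perm {π : Perm α} (hπ : π ∈ permsOn S) :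
    (unitRows M S (γ ∘ π)).det = (sign π : ℤ) • (unitRows M S γ).det := by
  rw [unitRows_comp_perm M γ hπ, det_permute, zsmul_eq_mul]

theorem det_mul_det_unitRows {i : α} (hi : i ∈ S) :
    M.det * (unitRows M S γ).det = ∑ t ∈ S, (sign (swap i t) : ℤ) •
      ((M.updateRow i (Pi.single (γ t) 1)).det * (unitRows M (S.erase i) (γ ∘ swap i t)).det) := by
  rw [det_mul_det_eq_sum_det_updateRow M _ i, ← sum_subset (subset_univ S)]
  · refine sum_congr rfl fun t ht => ?_
    have hrow : (unitRows M S γ).updateRow t (M i)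
        = (unitRows M (S.erase i) (γ ∘ swap i t)).submatrix (swap i t) id := by
      ext k l
      by_cases hk : k ∈ S <;>
        simp only [unitRows, updateRow_apply, of_apply, mem_erase, Function.comp_apply,
          swap_apply_def, submatrix_apply, id_eq, hk] <;> split_ifs <;> simp_all
    rw [hrow, det_permute, unitRows_row_of_mem γ ht, zsmul_eq_mul, mul_left_comm]
  · intro t _ ht
    rw [unitRows_row_of_notMem γ ht, det_updateRow_eq_zero (ne_of_mem_of_not_mem hi ht).symm,
      zero_mul]

end UnitRowsDet

variable (R : Type*) [CommRing R]

local notation "𝕏" => mvPolynomialX α α R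

theorem pderiv_det_unitRows {S : Finset α} {i : α} (hi : i ∉ S) (γ : α → α) (j : α) :
    pderiv (i, j) (unitRows 𝕏 S γ).det = ((unitRows 𝕏 S γ).updateRow i (Pi.single j 1)).det := by
  rw [Derivation.map_det, sum_eq_single i]
  · congr 1
    ext k l
    by_cases hk : k = i
    · subst hk
      simp [unitRows, hi, pderiv_X, Pi.single_apply]
    · simp [updateRow_ne hk]
  · intro k _ hk
    refine det_eq_zero_of_row_eq_zero k fun l => ?_
    by_cases hkS : k ∈ S
    · simp [unitRows, hkS, Pi.single_apply, apply_ite]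
    · simp [unitRows, hkS, pderiv_X, Pi.single_apply, hk]
  · simp

theorem pderiv_det_pow_mul_det_unitRows (m : ℕ) {I : Finset α} {i : α} (hi : i ∉ I)
    (γ : α → α) :
    pderiv (i, γ i) ((𝕏).det ^ m * (unitRows 𝕏 I γ).det) =
      m * (𝕏).det ^ (m - 1) * ((𝕏).updateRow i (Pi.single (γ i) 1)).det * (unitRows 𝕏 I γ).det
        + (𝕏).det ^ m * (unitRows 𝕏 (insert i I) γ).det := by
  have hdet := pderiv_det_unitRows R (notMem_empty i) γ (γ i)
  rw [unitRows_empty] at hdet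
  rw [pderiv_mul, pderiv_pow, hdet, pderiv_det_unitRows R hi, updateRow_unitRows_single _ _ hi,
    Function.update_eq_self]

theorem sum_sign_smul_pderiv_det_pow_mul_det_unitRows (m : ℕ) {I : Finset α} {i : α}
    (hi : i ∉ I) (γ : α → α) :
    ∑ t ∈ insert i I, (sign (swap i t) : ℤ) •
        pderiv (i, γ t) ((𝕏).det ^ m * (unitRows 𝕏 I (γ ∘ swap i t)).det) =
      (m + #(insert i I)) • ((𝕏).det ^ m * (unitRows 𝕏 (insert i I) γ).det) := by
  set D := (𝕏).det
  set Y := D ^ m * (unitRows 𝕏 (insert i I) γ).det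
  have hterm : ∀ t ∈ insert i I, (sign (swap i t) : ℤ) •
      pderiv (i, γ t) (D ^ m * (unitRows 𝕏 I (γ ∘ swap i t)).det) =
        m * D ^ (m - 1) * ((sign (swap i t) : ℤ) • (((𝕏).updateRow i (Pi.single (γ t) 1)).det *
          (unitRows 𝕏 I (γ ∘ swap i t)).det)) + Y := by
    intro t ht
    have h := pderiv_det_pow_mul_det_unitRows R m hi (γ ∘ swap i t)
    rw [Function.comp_apply, swap_apply_left,
      det_unitRows_comp_perm _ _ (swap_mem_permsOn (mem_insert_self i I) ht)] at h
    have hsign : ((sign (swap i t) : ℤ) : MvPolynomial (α × α) R) * (sign (swap i t) : ℤ) = 1 := by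
      rw [← Int.cast_mul, Int.units_coe_mul_self, Int.cast_one]
    rw [h]
    simp only [zsmul_eq_mul]
    linear_combination Y * hsign
  -- `m - 1` is truncated, but the factor `m` kills the term when `m = 0`.
  have hY : (m : MvPolynomial (α × α) R) * D ^ (m - 1) * (D * (unitRows 𝕏 (insert i I) γ).det) =
      m • Y := by
    cases m with
    | zero => simp
    | succ m =>
      rw [nsmul_eq_mul, Nat.add_sub_cancel]
      ring
  have hsylv := det_mul_det_unitRows 𝕏 γ (mem_insert_self i I)
  rw [erase_insert hi] at hsylv
  rw [sum_congr rfl hterm, sum_add_distrib, ← mul_sum, ← hsylv, hY, sum_const, add_nsmul]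

/-- The operator `det (∂_{i, γ j})_{i,j ∈ I}`, expanded by the Leibniz formula. -/
noncomputable def detPDeriv (I : Finset α) (γ : α → α) : Module.End R (MvPolynomial (α × α) R) :=
  ∑ π ∈ permsOn I, (sign π : ℤ) • pderivProd R I fun i => (i, γ (π i))

theorem detPDeriv_empty (γ : α → α) : detPDeriv R ∅ γ = 1 := by
  simp [detPDeriv, permsOn_empty, pderivProd]

theorem detPDeriv_insert {I : Finset α} {i : α} (hi : i ∉ I) (γ : α → α) :
    detPDeriv R (insert i I) γ = ∑ t ∈ insert i I,
      (sign (swap i t) : ℤ) • ((pderiv (i, γ t)).toLinearMap * detPDeriv R I (γ ∘ swap i t)) := by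
  rw [detPDeriv, sum_permsOn_insert hi]
  refine sum_congr rfl fun t _ => ?_
  rw [detPDeriv, mul_sum, smul_sum]
  refine sum_congr rfl fun ρ hρ => ?_
  rw [pderivProd_insert R hi, Perm.sign_mul, Units.val_mul, mul_smul, mul_smul_comm]
  simp [mem_permsOn.1 hρ i hi]

theorem detPDeriv_det_pow (m : ℕ) (I : Finset α) (γ : α → α) :
    detPDeriv R I γ ((𝕏).det ^ (m + 1)) =
      (∏ k ∈ Icc 1 #I, ((m : R) + k)) • ((𝕏).det ^ m * (unitRows 𝕏 I γ).det) := by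
  induction I using Finset.induction_on generalizing γ with
  | empty => simp [detPDeriv_empty, unitRows_empty, pow_succ]
  | insert i I hi ih =>
    simp only [detPDeriv_insert R hi, LinearMap.coe_sum, Finset.sum_apply, LinearMap.smul_apply,
      Module.End.mul_apply, Derivation.coeFn_coe, ih, map_smul]
    simp only [smul_comm (_ : ℤ) (_ : R), ← smul_sum]
    rw [sum_sign_smul_pderiv_det_pow_mul_det_unitRows R m hi, ← Nat.cast_smul_eq_nsmul R, smul_smul,
      card_insert_of_notMem hi, prod_Icc_succ_top (by omega)]
    push_cast
    rfl

end Cayley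

theorem cayley_identity_general (n : ℕ) (s : ℕ) :
    detOp0 n ((Xmat0 n).det ^ (s + 1)) =
      (∏ i ∈ Finset.Icc 1 n, ((s : ℚ) + i)) • (Xmat0 n).det ^ s := by
  have hop : detOp0 n = Cayley.detPDeriv ℚ univ id := by
    rw [detOp0, Cayley.detPDeriv, Cayley.permsOn_univ]
    refine sum_congr rfl fun σ _ => ?_
    simp only [pderivProd, Finset.noncommProd, Fin.univ_val_map, Multiset.noncommProd_coe]
    rfl
  have h := Cayley.detPDeriv_det_pow ℚ s (univ : Finset (Fin n)) id
  rw [Cayley.unitRows_univ_id, det_one, mul_one, card_univ, Fintype.card_fin] at h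
  rw [hop]
  exact h

/-- Cayley identity: `det(∂X)·(det X)^{s+1} = (∏_{i=1}^{n}(s+i))·(det X)^{s}`. -/
theorem cayley_identity (n : ℕ) (hn : 0 < n) (s : ℕ) :
    detOp0 n ((Xmat0 n).det ^ (s + 1)) =
      (∏ i ∈ Finset.Icc 1 n, ((s : ℚ) + i)) • (Xmat0 n).det ^ s :=
  cayley_identity_general n s
end

section
/- Second-order invariant-operator eigenvalue identity for f = det(XᵗX) (the factor b'_{1,1} in the orthogonal example): there exists a nonzero constant c, independent of s, such that for every natural number s, Σ_{k=1}^{n} Σ_{l=1}^{n} (Σ_{a=1}^{m} ∂_{ak}∂_{al})( (Σ_{b=1}^{m} x_{bk}x_{bl}) · f^{s} ) = c·(2s+n+1)(2s+m)·f^{s}. -/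
open MvPolynomial

/-- The partial-derivative operator `∂_{ak}` as a linear endomorphism of
`ℂ[x_{ak} : 1 ≤ a ≤ m, 1 ≤ k ≤ n]`. -/
noncomputable def pd6 {m n : ℕ} (v : Fin m × Fin n) :
    Module.End ℂ (MvPolynomial (Fin m × Fin n) ℂ) :=
  (pderiv v).toLinearMap

/-- The generic `m × n` matrix `X = (x_{ak})`. -/
noncomputable def Xmat6 (m n : ℕ) :
    Matrix (Fin m) (Fin n) (MvPolynomial (Fin m × Fin n) ℂ) :=
  fun a k => X (a, k)

/-- The polynomial `f = det(XᵗX)`. -/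
noncomputable def fOrth6 (m n : ℕ) : MvPolynomial (Fin m × Fin n) ℂ :=
  ((Xmat6 m n).transpose * Xmat6 m n).det

open Matrix Finset

namespace OrthAux

variable {σ : Type*} [DecidableEq σ]

lemma pderiv_finset_prod (v : σ) {ι : Type*} [DecidableEq ι] (s : Finset ι)
    (g : ι → MvPolynomial σ ℂ) :
    pderiv v (∏ i ∈ s, g i) = ∑ i ∈ s, pderiv v (g i) * ∏ j ∈ s.erase i, g j := by
  induction s using Finset.induction_on with
  | empty => simp
  | @insert a s ha ih =>
    rw [Finset.prod_insert ha, pderiv_mul, ih, Finset.sum_insert ha, Finset.erase_insert ha,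
      Finset.mul_sum]
    congr 1
    refine Finset.sum_congr rfl fun i hi => ?_
    rw [Finset.erase_insert_of_ne (fun h => ha (by rw [h]; exact hi)),
      Finset.prod_insert (fun h => ha (Finset.mem_of_mem_erase h))]
    ring

omit [DecidableEq σ] in
lemma det_updateColumn_expand {k : ℕ} (M : Matrix (Fin k) (Fin k) (MvPolynomial σ ℂ))
    (i : Fin k) (b : Fin k → MvPolynomial σ ℂ) :
    (M.updateCol i b).det
      = ∑ τ : Equiv.Perm (Fin k),
          ((Equiv.Perm.sign τ : ℤ) : MvPolynomial σ ℂ) *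
            (b (τ i) * ∏ j ∈ Finset.univ.erase i, M (τ j) j) := by
  rw [Matrix.det_apply']
  refine Finset.sum_congr rfl fun τ _ => ?_
  congr 1
  rw [← Finset.mul_prod_erase Finset.univ _ (Finset.mem_univ i)]
  rw [Matrix.updateCol_apply, if_pos rfl]
  congr 1
  refine Finset.prod_congr rfl fun j hj => ?_
  rw [Matrix.updateCol_apply, if_neg (Finset.ne_of_mem_erase hj)]

lemma pderiv_det (v : σ) {k : ℕ} (M : Matrix (Fin k) (Fin k) (MvPolynomial σ ℂ)) :
    pderiv v M.det = ∑ i, ∑ j, M.adjugate i j * pderiv v (M j i) := by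
  have h1 : pderiv v M.det
      = ∑ i, (M.updateCol i (fun j => pderiv v (M j i))).det := by
    calc pderiv v M.det
        = ∑ τ : Equiv.Perm (Fin k),
            pderiv v (((Equiv.Perm.sign τ : ℤ) : MvPolynomial σ ℂ) * ∏ i, M (τ i) i) := by
          rw [Matrix.det_apply', map_sum]
      _ = ∑ τ : Equiv.Perm (Fin k), ∑ i,
            ((Equiv.Perm.sign τ : ℤ) : MvPolynomial σ ℂ) *
              (pderiv v (M (τ i) i) * ∏ j ∈ Finset.univ.erase i, M (τ j) j) := by
          refine Finset.sum_congr rfl fun τ _ => ?_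
          rw [pderiv_mul, pderiv_finset_prod, Derivation.map_intCast, Finset.mul_sum]
          simp
      _ = ∑ i, ∑ τ : Equiv.Perm (Fin k),
            ((Equiv.Perm.sign τ : ℤ) : MvPolynomial σ ℂ) *
              (pderiv v (M (τ i) i) * ∏ j ∈ Finset.univ.erase i, M (τ j) j) :=
          Finset.sum_comm
      _ = ∑ i, (M.updateCol i (fun j => pderiv v (M j i))).det := by
          refine Finset.sum_congr rfl fun i _ => ?_
          rw [det_updateColumn_expand]
  rw [h1]
  refine Finset.sum_congr rfl fun i _ => ?_
  rw [← Matrix.cramer_apply, Matrix.cramer_eq_adjugate_mulVec, Matrix.mulVec,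
    dotProduct]


noncomputable def Pmat (m n : ℕ) :
    Matrix (Fin n) (Fin n) (MvPolynomial (Fin m × Fin n) ℂ) :=
  Matrix.of fun k l => ∑ b : Fin m, X (b, k) * X (b, l)

variable {m n : ℕ}

lemma Pmat_apply (k l : Fin n) :
    Pmat m n k l = ∑ b : Fin m, X (b, k) * X (b, l) := rfl

lemma fOrth6_eq : fOrth6 m n = (Pmat m n).det := by
  have h : (Xmat6 m n)ᵀ * Xmat6 m n = Pmat m n := by
    ext k l
    simp [Matrix.mul_apply, Xmat6, Pmat_apply]
  rw [fOrth6, h]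

lemma Pmat_transpose : (Pmat m n)ᵀ = Pmat m n := by
  ext k l
  simp [Pmat_apply, Matrix.transpose_apply, mul_comm]

lemma adj_symm (i j : Fin n) :
    (Pmat m n).adjugate i j = (Pmat m n).adjugate j i := by
  have h := Matrix.adjugate_transpose (Pmat m n)
  rw [Pmat_transpose] at h
  conv_lhs => rw [← h]
  rfl

lemma pderiv_Pmat (a : Fin m) (w : Fin n) (i j : Fin n) :
    pderiv (a, w) (Pmat m n i j)
      = (if w = i then X (a, j) else 0) + (if w = j then X (a, i) else 0) := by
  rw [Pmat_apply, map_sum]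
  rw [Finset.sum_eq_single a]
  · rw [pderiv_mul]
    by_cases hi : w = i <;> by_cases hj : w = j <;>
      simp [pderiv_X, Pi.single_apply, Prod.ext_iff, hi, hj, eq_comm]
  · intro b _ hb
    rw [pderiv_mul]
    have h1 : pderiv (a, w) (X (b, i) : MvPolynomial (Fin m × Fin n) ℂ) = 0 :=
      pderiv_X_of_ne (fun h => hb (congrArg Prod.fst h))
    have h2 : pderiv (a, w) (X (b, j) : MvPolynomial (Fin m × Fin n) ℂ) = 0 :=
      pderiv_X_of_ne (fun h => hb (congrArg Prod.fst h))
    rw [h1, h2]; ring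
  · simp

local notation "f" => fOrth6 m n

lemma pderiv_f (a : Fin m) (l : Fin n) :
    pderiv (a, l) f = ∑ j, ((Pmat m n).adjugate l j * X (a, j) + (Pmat m n).adjugate l j * X (a, j)) := by
  rw [fOrth6_eq, pderiv_det]
  have step : ∀ i : Fin n, ∑ j, (Pmat m n).adjugate i j * pderiv (a, l) (Pmat m n j i)
      = (Pmat m n).adjugate i l * X (a, i) + (if l = i then ∑ j, (Pmat m n).adjugate i j * X (a, j) else 0) := by
    intro i
    simp_rw [pderiv_Pmat, mul_add, mul_ite, mul_zero, Finset.sum_add_distrib,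
      Finset.sum_ite_eq, Finset.mem_univ, if_true]
    by_cases h : l = i <;> simp [h, Finset.mul_sum]
  simp_rw [step]
  rw [Finset.sum_add_distrib, Finset.sum_ite_eq, if_pos (Finset.mem_univ l)]
  rw [Finset.sum_add_distrib]
  congr 1
  refine Finset.sum_congr rfl fun i _ => ?_
  rw [adj_symm]

lemma hentry (k j : Fin n) :
    ∑ l, Pmat m n k l * (Pmat m n).adjugate l j = if k = j then f else 0 := by
  have h := congrFun (congrFun (Matrix.mul_adjugate (Pmat m n)) k) j
  rw [Matrix.mul_apply] at h
  rw [h, fOrth6_eq]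
  simp [Matrix.one_apply, mul_ite]

lemma hentry2 (l : Fin n) : ∑ j, (Pmat m n).adjugate l j * Pmat m n j l = f := by
  have h := congrFun (congrFun (Matrix.adjugate_mul (Pmat m n)) l) l
  rw [Matrix.mul_apply] at h
  rw [h, fOrth6_eq]
  simp

lemma key_K (a : Fin m) (k : Fin n) :
    ∑ l, Pmat m n k l * pderiv (a, l) f = f * X (a, k) + f * X (a, k) := by
  calc ∑ l, Pmat m n k l * pderiv (a, l) f
      = ∑ l, ∑ j, (Pmat m n k l * (Pmat m n).adjugate l j * X (a, j) + Pmat m n k l * (Pmat m n).adjugate l j * X (a, j)) := by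
        refine Finset.sum_congr rfl fun l _ => ?_
        rw [pderiv_f, Finset.mul_sum]
        exact Finset.sum_congr rfl fun j _ => by ring
    _ = ∑ j, ((∑ l, Pmat m n k l * (Pmat m n).adjugate l j) * X (a, j) + (∑ l, Pmat m n k l * (Pmat m n).adjugate l j) * X (a, j)) := by
        rw [Finset.sum_comm]
        refine Finset.sum_congr rfl fun j _ => ?_
        rw [Finset.sum_add_distrib, Finset.sum_mul]
    _ = f * X (a, k) + f * X (a, k) := by
        simp_rw [hentry]
        simp [ite_mul, Finset.sum_add_distrib, Finset.sum_ite_eq, Finset.mem_univ]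

lemma euler : ∑ a : Fin m, ∑ l : Fin n, X (a, l) * pderiv (a, l) f
    = (n : MvPolynomial (Fin m × Fin n) ℂ) * (f + f) := by
  calc ∑ a : Fin m, ∑ l : Fin n, X (a, l) * pderiv (a, l) f
      = ∑ a : Fin m, ∑ l : Fin n, ∑ j,
          ((Pmat m n).adjugate l j * (X (a, j) * X (a, l)) + (Pmat m n).adjugate l j * (X (a, j) * X (a, l))) := by
        refine Finset.sum_congr rfl fun a _ => Finset.sum_congr rfl fun l _ => ?_
        rw [pderiv_f, Finset.mul_sum]
        exact Finset.sum_congr rfl fun j _ => by ring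
    _ = ∑ l : Fin n, ∑ j, ((Pmat m n).adjugate l j * Pmat m n j l + (Pmat m n).adjugate l j * Pmat m n j l) := by
        rw [Finset.sum_comm]
        refine Finset.sum_congr rfl fun l _ => ?_
        rw [Finset.sum_comm]
        refine Finset.sum_congr rfl fun j _ => ?_
        rw [Finset.sum_add_distrib, ← Finset.mul_sum, Pmat_apply]
    _ = ∑ _l : Fin n, (f + f) := by
        refine Finset.sum_congr rfl fun l _ => ?_
        rw [Finset.sum_add_distrib, hentry2]
    _ = (n : MvPolynomial (Fin m × Fin n) ℂ) * (f + f) := by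
        rw [Finset.sum_const, Finset.card_univ, Fintype.card_fin, nsmul_eq_mul]

lemma pow_deriv (v : Fin m × Fin n) (s : ℕ) :
    pderiv v (f ^ s) * f = (s : MvPolynomial (Fin m × Fin n) ℂ) * f ^ s * pderiv v f := by
  induction s with
  | zero => simp
  | succ s ih =>
    rw [pow_succ, pderiv_mul]
    push_cast
    linear_combination (f : MvPolynomial (Fin m × Fin n) ℂ) * ih

lemma pow_dderiv (u v : Fin m × Fin n) (s : ℕ) :
    pderiv u (pderiv v (f ^ s)) * (f * f)
      = (s : MvPolynomial (Fin m × Fin n) ℂ) * ((s : MvPolynomial (Fin m × Fin n) ℂ) - 1)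
            * f ^ s * (pderiv u f * pderiv v f)
        + (s : MvPolynomial (Fin m × Fin n) ℂ) * (f ^ s * f) * pderiv u (pderiv v f) := by
  have hv := pow_deriv (m := m) (n := n) v s
  have hu := pow_deriv (m := m) (n := n) u s
  have h := congrArg (pderiv u) hv
  simp only [pderiv_mul, Derivation.map_natCast, zero_mul, add_zero, zero_add] at h
  linear_combination (f : MvPolynomial (Fin m × Fin n) ℂ) * h
    + (s : MvPolynomial (Fin m × Fin n) ℂ) * pderiv v f * hu - pderiv u f * hv

lemma f_ne_zero (hmn : n < m) : f ≠ 0 := by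
  intro h0
  have hφ : (aeval (R := ℂ)
      (fun v : Fin m × Fin n => if (v.1 : ℕ) = (v.2 : ℕ) then (1 : ℂ) else 0)) f = 1 := by
    rw [fOrth6_eq, AlgHom.map_det, AlgHom.mapMatrix_apply]
    have : (Pmat m n).map (aeval
        (fun v : Fin m × Fin n => if (v.1 : ℕ) = (v.2 : ℕ) then (1 : ℂ) else 0))
        = (1 : Matrix (Fin n) (Fin n) ℂ) := by
      ext k l
      rw [Matrix.map_apply, Pmat_apply, map_sum]
      simp_rw [_root_.map_mul, aeval_X]
      rw [Finset.sum_eq_single (Fin.castLE hmn.le k)]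
      · simp only [Fin.coe_castLE, if_pos rfl, one_mul, Matrix.one_apply, Fin.val_eq_val]
        by_cases h : (k : ℕ) = (l : ℕ) <;> simp [h, Fin.val_eq_val] at * <;> simp [h]
      · intro b _ hb
        rw [if_neg, zero_mul]
        intro hbk
        exact hb (Fin.ext (by simp [hbk]))
      · simp
    rw [this, Matrix.det_one]
  rw [h0, map_zero] at hφ
  exact zero_ne_one hφ


lemma DlP (k l : Fin n) (a : Fin m) :
    pderiv (a, l) (Pmat m n k l) = (if l = k then X (a, l) else 0) + X (a, k) := by
  rw [pderiv_Pmat, if_pos rfl]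

lemma DkP (k l : Fin n) (a : Fin m) :
    pderiv (a, k) (Pmat m n k l) = X (a, l) + (if k = l then X (a, k) else 0) := by
  rw [pderiv_Pmat, if_pos rfl]

lemma sum_ite_const {α : Type*} [Fintype α] (c : Prop) [Decidable c]
    (g : α → MvPolynomial (Fin m × Fin n) ℂ) :
    ∑ a : α, (if c then g a else 0) = if c then ∑ a : α, g a else 0 := by
  split_ifs <;> simp

lemma sumDlP (g : MvPolynomial (Fin m × Fin n) ℂ) :
    ∑ k : Fin n, ∑ l : Fin n, ∑ a : Fin m,
        pderiv (a, l) (Pmat m n k l) * pderiv (a, k) g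
      = ((n : MvPolynomial (Fin m × Fin n) ℂ) + 1)
          * ∑ a : Fin m, ∑ k : Fin n, X (a, k) * pderiv (a, k) g := by
  have h1 : ∀ k : Fin n, ∑ l : Fin n, ∑ a : Fin m,
      pderiv (a, l) (Pmat m n k l) * pderiv (a, k) g
      = ∑ a : Fin m, X (a, k) * pderiv (a, k) g
        + (n : MvPolynomial (Fin m × Fin n) ℂ) * ∑ a : Fin m, X (a, k) * pderiv (a, k) g := by
    intro k
    simp only [DlP, add_mul, ite_mul, zero_mul, Finset.sum_add_distrib, sum_ite_const,
      Finset.sum_ite_eq, Finset.sum_ite_eq', Finset.mem_univ, if_true, Finset.sum_const,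
      Finset.card_univ, Fintype.card_fin, nsmul_eq_mul]
    try push_cast
    try ring
  simp_rw [h1, Finset.sum_add_distrib, ← Finset.mul_sum]
  rw [Finset.sum_comm]
  ring

lemma sumDkP (g : MvPolynomial (Fin m × Fin n) ℂ) :
    ∑ k : Fin n, ∑ l : Fin n, ∑ a : Fin m,
        pderiv (a, k) (Pmat m n k l) * pderiv (a, l) g
      = ((n : MvPolynomial (Fin m × Fin n) ℂ) + 1)
          * ∑ a : Fin m, ∑ l : Fin n, X (a, l) * pderiv (a, l) g := by
  have h1 : ∀ l : Fin n, ∑ k : Fin n, ∑ a : Fin m,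
      pderiv (a, k) (Pmat m n k l) * pderiv (a, l) g
      = (n : MvPolynomial (Fin m × Fin n) ℂ) * ∑ a : Fin m, X (a, l) * pderiv (a, l) g
        + ∑ a : Fin m, X (a, l) * pderiv (a, l) g := by
    intro l
    simp only [DkP, add_mul, ite_mul, zero_mul, Finset.sum_add_distrib, sum_ite_const,
      Finset.sum_ite_eq, Finset.sum_ite_eq', Finset.mem_univ, if_true, Finset.sum_const,
      Finset.card_univ, Fintype.card_fin, nsmul_eq_mul]
    try push_cast
    try ring
  rw [Finset.sum_comm]
  simp_rw [h1, Finset.sum_add_distrib, ← Finset.mul_sum]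
  rw [Finset.sum_comm]
  ring

lemma Epow (s : ℕ) :
    (∑ a : Fin m, ∑ k : Fin n, X (a, k) * pderiv (a, k) (f ^ s)) * f
      = (s : MvPolynomial (Fin m × Fin n) ℂ) * f ^ s
          * ((n : MvPolynomial (Fin m × Fin n) ℂ) * (f + f)) := by
  rw [Finset.sum_mul]
  calc ∑ a : Fin m, (∑ k : Fin n, X (a, k) * pderiv (a, k) (f ^ s)) * f
      = ∑ a : Fin m, ∑ k : Fin n,
          ((s : MvPolynomial (Fin m × Fin n) ℂ) * f ^ s * (X (a, k) * pderiv (a, k) f)) := by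
        refine Finset.sum_congr rfl fun a _ => ?_
        rw [Finset.sum_mul]
        refine Finset.sum_congr rfl fun k _ => ?_
        linear_combination X (a, k) * pow_deriv (m := m) (n := n) (a, k) s
    _ = (s : MvPolynomial (Fin m × Fin n) ℂ) * f ^ s
          * ∑ a : Fin m, ∑ k : Fin n, X (a, k) * pderiv (a, k) f := by
        simp_rw [← Finset.mul_sum]
    _ = _ := by rw [euler]

lemma ddP (k l : Fin n) (a : Fin m) :
    pderiv (a, k) (pderiv (a, l) (Pmat m n k l))
      = (if l = k then 1 else 0) + 1 := by
  rw [pderiv_Pmat, if_pos rfl, map_add]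
  by_cases h : l = k
  · subst h; simp
  · rw [if_neg h, map_zero, pderiv_X_self]
    simp [h]

lemma F1 : ∑ k : Fin n, ∑ l : Fin n, ∑ a : Fin m,
      pderiv (a, k) (pderiv (a, l) (Pmat m n k l))
    = (m : MvPolynomial (Fin m × Fin n) ℂ)
        * ((n : MvPolynomial (Fin m × Fin n) ℂ) * (n : MvPolynomial (Fin m × Fin n) ℂ)
            + (n : MvPolynomial (Fin m × Fin n) ℂ)) := by
  simp_rw [ddP]
  simp [Finset.sum_add_distrib, Finset.sum_ite_eq, Finset.sum_const, Finset.card_univ]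
  push_cast
  ring


local notation "RR" => MvPolynomial (Fin m × Fin n) ℂ

lemma F4a : ∑ k : Fin n, ∑ l : Fin n, ∑ a : Fin m,
      Pmat m n k l * (pderiv (a, k) f * pderiv (a, l) f)
    = (f + f) * ((n : RR) * (f + f)) := by
  calc ∑ k : Fin n, ∑ l : Fin n, ∑ a : Fin m,
        Pmat m n k l * (pderiv (a, k) f * pderiv (a, l) f)
      = ∑ k : Fin n, ∑ a : Fin m, ∑ l : Fin n,
          Pmat m n k l * (pderiv (a, k) f * pderiv (a, l) f) := by
        exact Finset.sum_congr rfl fun k _ => Finset.sum_comm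
    _ = ∑ k : Fin n, ∑ a : Fin m,
          pderiv (a, k) f * (f * X (a, k) + f * X (a, k)) := by
        refine Finset.sum_congr rfl fun k _ => Finset.sum_congr rfl fun a _ => ?_
        rw [← key_K a k, Finset.mul_sum]
        exact Finset.sum_congr rfl fun l _ => by ring
    _ = (f + f) * ∑ k : Fin n, ∑ a : Fin m, X (a, k) * pderiv (a, k) f := by
        rw [Finset.mul_sum]
        refine Finset.sum_congr rfl fun k _ => ?_
        rw [Finset.mul_sum]
        exact Finset.sum_congr rfl fun a _ => by ring
    _ = (f + f) * ((n : RR) * (f + f)) := by rw [Finset.sum_comm, euler]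

lemma F4b : ∑ k : Fin n, ∑ l : Fin n, ∑ a : Fin m,
      Pmat m n k l * pderiv (a, k) (pderiv (a, l) f)
    + ((n : RR) + 1) * ((n : RR) * (f + f))
    = (n : RR) * (f + f) + (n : RR) * (f + f) + (m : RR) * (n : RR) * (f + f) := by
  have hker : ∀ (a : Fin m) (k : Fin n),
      ∑ l : Fin n, (pderiv (a, k) (Pmat m n k l) * pderiv (a, l) f
          + Pmat m n k l * pderiv (a, k) (pderiv (a, l) f))
      = pderiv (a, k) f * X (a, k) + f + (pderiv (a, k) f * X (a, k) + f) := by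
    intro a k
    have h := congrArg (pderiv (a, k)) (key_K (m := m) (n := n) a k)
    rw [map_sum] at h
    simp only [pderiv_mul, map_add, pderiv_X_self, mul_one] at h
    linear_combination h
  have hsplit : ∑ k : Fin n, ∑ a : Fin m, ∑ l : Fin n,
      (pderiv (a, k) (Pmat m n k l) * pderiv (a, l) f
          + Pmat m n k l * pderiv (a, k) (pderiv (a, l) f))
      = ∑ k : Fin n, ∑ a : Fin m,
          (pderiv (a, k) f * X (a, k) + f + (pderiv (a, k) f * X (a, k) + f)) :=
    Finset.sum_congr rfl fun k _ => Finset.sum_congr rfl fun a _ => hker a k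
  have hL : ∑ k : Fin n, ∑ a : Fin m, ∑ l : Fin n,
      (pderiv (a, k) (Pmat m n k l) * pderiv (a, l) f
          + Pmat m n k l * pderiv (a, k) (pderiv (a, l) f))
      = ∑ k : Fin n, ∑ l : Fin n, ∑ a : Fin m, pderiv (a, k) (Pmat m n k l) * pderiv (a, l) f
        + ∑ k : Fin n, ∑ l : Fin n, ∑ a : Fin m,
            Pmat m n k l * pderiv (a, k) (pderiv (a, l) f) := by
    simp_rw [Finset.sum_add_distrib]
    congr 1 <;> exact Finset.sum_congr rfl fun k _ => Finset.sum_comm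
  have hR : ∑ k : Fin n, ∑ a : Fin m,
      (pderiv (a, k) f * X (a, k) + f + (pderiv (a, k) f * X (a, k) + f))
      = (n : RR) * (f + f) + (n : RR) * (f + f) + (m : RR) * (n : RR) * (f + f) := by
    simp_rw [Finset.sum_add_distrib, Finset.sum_const, Finset.card_univ, Fintype.card_fin,
      nsmul_eq_mul]
    have he : ∑ k : Fin n, ∑ a : Fin m, pderiv (a, k) f * X (a, k)
        = (n : RR) * (f + f) := by
      rw [← euler (m := m) (n := n), Finset.sum_comm]
      exact Finset.sum_congr rfl fun k _ => Finset.sum_congr rfl fun a _ => by ring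
    rw [he]
    push_cast
    ring
  have hD := sumDkP (m := m) (n := n) f
  rw [hsplit] at hL
  rw [hR] at hL
  have heul := euler (m := m) (n := n)
  linear_combination - hL - hD - ((n : RR) + 1) * heul
end OrthAux

open Matrix Finset OrthAux

/-- Second-order invariant-operator eigenvalue identity for `f = det(XᵗX)`:
there is a nonzero constant `c`, independent of `s`, with
`Σ_{k,l} (Σ_a ∂_{ak}∂_{al})((Σ_b x_{bk}x_{bl})·f^s) = c·(2s+n+1)(2s+m)·f^s`
for all `s ∈ ℕ`. -/
theorem orthogonal_second_order_eigenvalue (m n : ℕ) (hn : 1 ≤ n) (hmn : n < m) :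
    ∃ c : ℂ, c ≠ 0 ∧ ∀ s : ℕ,
      (∑ k : Fin n, ∑ l : Fin n,
          (∑ a : Fin m, pd6 (a, k) * pd6 (a, l))
            ((∑ b : Fin m, X (b, k) * X (b, l)) * fOrth6 m n ^ s)) =
        (c * (2 * (s : ℂ) + n + 1) * (2 * (s : ℂ) + m)) • fOrth6 m n ^ s := by
  set R := MvPolynomial (Fin m × Fin n) ℂ
  set f : R := fOrth6 m n with hfdef
  refine ⟨(n : ℂ), Nat.cast_ne_zero.mpr (by omega), fun s => ?_⟩
  have hf : f ≠ 0 := f_ne_zero hmn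
  have hff : f * f ≠ 0 := mul_ne_zero hf hf
  apply mul_right_cancel₀ hff
  have hop : ∀ k l : Fin n,
      (∑ a : Fin m, pd6 (a, k) * pd6 (a, l)) ((∑ b : Fin m, X (b, k) * X (b, l)) * f ^ s)
      = ∑ a : Fin m, pderiv (a, k) (pderiv (a, l) (Pmat m n k l * f ^ s)) := by
    intro k l
    rw [LinearMap.sum_apply]
    exact Finset.sum_congr rfl fun a _ => rfl
  simp_rw [hop]
  have expand : ∀ (k l : Fin n) (a : Fin m),
      pderiv (a, k) (pderiv (a, l) (Pmat m n k l * f ^ s))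
      = pderiv (a, k) (pderiv (a, l) (Pmat m n k l)) * f ^ s
        + pderiv (a, l) (Pmat m n k l) * pderiv (a, k) (f ^ s)
        + pderiv (a, k) (Pmat m n k l) * pderiv (a, l) (f ^ s)
        + Pmat m n k l * pderiv (a, k) (pderiv (a, l) (f ^ s)) := by
    intro k l a
    rw [pderiv_mul, map_add, pderiv_mul, pderiv_mul]
    ring
  simp_rw [expand]
  simp only [Finset.sum_add_distrib]
  rw [add_mul, add_mul, add_mul]
  -- term 1
  have e1 : ∑ k : Fin n, ∑ l : Fin n, ∑ a : Fin m,
      pderiv (a, k) (pderiv (a, l) (Pmat m n k l)) * f ^ s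
      = ((m : R) * ((n : R) * (n : R) + (n : R))) * f ^ s := by
    simp_rw [← Finset.sum_mul]
    rw [F1]
  -- term 4
  have e4 : (∑ k : Fin n, ∑ l : Fin n, ∑ a : Fin m,
        Pmat m n k l * pderiv (a, k) (pderiv (a, l) (f ^ s))) * (f * f)
      = (s : R) * ((s : R) - 1) * f ^ s * ((f + f) * ((n : R) * (f + f)))
        + (s : R) * (f ^ s * f) * (∑ k : Fin n, ∑ l : Fin n,
            Pmat m n k l * ∑ a : Fin m, pderiv (a, k) (pderiv (a, l) f)) := by
    rw [Finset.sum_mul]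
    simp_rw [Finset.sum_mul]
    have e4p : ∀ (k l : Fin n) (a : Fin m),
        Pmat m n k l * pderiv (a, k) (pderiv (a, l) (f ^ s)) * (f * f)
        = (s : R) * ((s : R) - 1) * f ^ s
              * (Pmat m n k l * (pderiv (a, k) f * pderiv (a, l) f))
          + (s : R) * (f ^ s * f) * (Pmat m n k l * pderiv (a, k) (pderiv (a, l) f)) := by
      intro k l a
      linear_combination Pmat m n k l * pow_dderiv (m := m) (n := n) (a, k) (a, l) s
    simp_rw [e4p, Finset.sum_add_distrib, ← Finset.mul_sum]
    have hSA : ∑ k : Fin n, ∑ l : Fin n,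
        Pmat m n k l * ∑ a : Fin m, pderiv (a, k) f * pderiv (a, l) f
        = (f + f) * ((n : R) * (f + f)) := by
      rw [← F4a (m := m) (n := n)]
      exact Finset.sum_congr rfl fun k _ => Finset.sum_congr rfl fun l _ =>
        Finset.mul_sum _ _ _
    rw [hSA]
  rw [e1, sumDlP (f ^ s), sumDkP (f ^ s), e4]
  -- scalar side
  rw [MvPolynomial.smul_eq_C_mul]
  have hC : (C ((n : ℂ) * (2 * (s : ℂ) + (n : ℂ) + 1) * (2 * (s : ℂ) + (m : ℂ))) : R)
      = (n : R) * (2 * (s : R) + (n : R) + 1) * (2 * (s : R) + (m : R)) := by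
    simp only [_root_.map_mul, _root_.map_add, _root_.map_one, _root_.map_ofNat, map_natCast]
  rw [hC]
  have hE := Epow (m := m) (n := n) s
  have h4b := F4b (m := m) (n := n)
  have hSB2 : ∑ k : Fin n, ∑ l : Fin n,
      Pmat m n k l * ∑ a : Fin m, pderiv (a, k) (pderiv (a, l) f)
      = ∑ k : Fin n, ∑ l : Fin n, ∑ a : Fin m,
          Pmat m n k l * pderiv (a, k) (pderiv (a, l) f) :=
    Finset.sum_congr rfl fun k _ => Finset.sum_congr rfl fun l _ => Finset.mul_sum _ _ _
  rw [← hSB2] at h4b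
  linear_combination (2 * ((n : R) + 1) * f) * hE
    + (s : R) * (f ^ s * f) * h4b
end

section
/- The complement of the zero locus of the D4 quiver semi-invariant is a single orbit: if (X, Y, Z) and (X', Y', Z') are triples of complex matrices of sizes β₄×β₁, β₄×β₂, β₄×β₃ with det[[X, Y, 0],[0, Y, Z]] ≠ 0 and det[[X', Y', 0],[0, Y', Z']] ≠ 0, then there exist invertible complex matrices g₁ ∈ GL(β₁), g₂ ∈ GL(β₂), g₃ ∈ GL(β₃), g₄ ∈ GL(β₄) such that X' = g₄ X g₁⁻¹, Y' = g₄ Y g₂⁻¹ and Z' = g₄ Z g₃⁻¹. -/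
/-- The `2β₄ × (β₁+β₂+β₃)` block matrix `[[X, Y, 0],[0, Y, Z]]`. -/
def d4BlockMat10 {β₁ β₂ β₃ β₄ : ℕ}
    (X : Matrix (Fin β₄) (Fin β₁) ℂ) (Y : Matrix (Fin β₄) (Fin β₂) ℂ)
    (Z : Matrix (Fin β₄) (Fin β₃) ℂ) :
    Matrix (Fin β₄ ⊕ Fin β₄) (Fin β₁ ⊕ (Fin β₂ ⊕ Fin β₃)) ℂ :=
  Matrix.fromBlocks X (Matrix.fromCols Y 0) 0 (Matrix.fromCols Y Z)

/-- The canonical (order-preserving) identification of the row index set with the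
column index set, using `β₁ + β₂ + β₃ = 2β₄`. -/
def d4Equiv10 {β₁ β₂ β₃ β₄ : ℕ} (h : β₁ + β₂ + β₃ = 2 * β₄) :
    (Fin β₄ ⊕ Fin β₄) ≃ (Fin β₁ ⊕ (Fin β₂ ⊕ Fin β₃)) :=
  ((finSumFinEquiv.trans (finCongr (by omega : β₄ + β₄ = β₁ + (β₂ + β₃)))).trans
      finSumFinEquiv.symm).trans
    (Equiv.sumCongr (Equiv.refl (Fin β₁)) finSumFinEquiv.symm)

/-- The D4 semi-invariant evaluated at a triple of complex matrices `(X, Y, Z)`: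
the determinant of the square block matrix `[[X, Y, 0],[0, Y, Z]]`. -/
def d4Det10 {β₁ β₂ β₃ β₄ : ℕ} (h : β₁ + β₂ + β₃ = 2 * β₄)
    (X : Matrix (Fin β₄) (Fin β₁) ℂ) (Y : Matrix (Fin β₄) (Fin β₂) ℂ)
    (Z : Matrix (Fin β₄) (Fin β₃) ℂ) : ℂ :=
  ((d4BlockMat10 X Y Z).submatrix id (d4Equiv10 h)).det

/-!
A nonzero semi-invariant means the block matrix has trivial kernel: `X a + Y b = 0 = Y b + Z c`
forces `a = b = c = 0`. Hence `X, Y, Z` are injective and their column spaces `A, B, C ⊆ ℂ^β₄`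
satisfy `A ⊓ B ⊓ C = ⊥` and `dim A + dim B + dim C = 2 β₄`. A dimension count then forces
`ℂ^β₄ = (A ⊓ B) ⊕ (A ⊓ C) ⊕ (B ⊓ C)` with `A = (A ⊓ B) ⊕ (A ⊓ C)` (and likewise for `B`, `C`),
each piece having a dimension fixed by the `βᵢ`. So two such configurations are related by a `g₄`
matching the pieces, and `g₁, g₂, g₃` are read off from the injective maps `X, Y, Z`.
-/

open Module Submodule Matrix

theorem DirectSum.IsInternal.exists_linearEquiv_map_eq {ι R V W : Type*} [DecidableEq ι]
    [Semiring R] [AddCommMonoid V] [Module R V] [AddCommMonoid W] [Module R W]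
    {p : ι → Submodule R V} {q : ι → Submodule R W} (hp : DirectSum.IsInternal p)
    (hq : DirectSum.IsInternal q) (e : ∀ i, p i ≃ₗ[R] q i) :
    ∃ φ : V ≃ₗ[R] W, ∀ i, (p i).map (φ : V →ₗ[R] W) = q i := by
  let P := LinearEquiv.ofBijective (coeLinearMap p) hp
  let Q := LinearEquiv.ofBijective (coeLinearMap q) hq
  let φ : V ≃ₗ[R] W := P.symm ≪≫ₗ DFinsupp.mapRange.linearEquiv e ≪≫ₗ Q
  have hφ : ∀ i (x : p i), φ x = e i x := fun i x => by
    have hx : P.symm x = DirectSum.of (fun i => p i) i x :=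
      P.symm_apply_eq.2 (coeLinearMap_of p i x).symm
    rw [LinearEquiv.trans_apply, LinearEquiv.trans_apply, hx]
    change coeLinearMap q (DFinsupp.mapRange.linearEquiv e (DFinsupp.single i x)) = _
    rw [DFinsupp.mapRange.linearEquiv_apply, DFinsupp.mapRange_single]
    exact coeLinearMap_of q i _
  refine ⟨φ, fun i => ?_⟩
  have : (φ : V →ₗ[R] W) ∘ₗ (p i).subtype = (q i).subtype ∘ₗ (e i : p i →ₗ[R] q i) :=
    LinearMap.ext (hφ i)
  rw [← range_subtype (p i), ← LinearMap.range_comp, this,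
    LinearMap.range_comp_of_range_eq_top _ (LinearEquiv.range _), range_subtype]

section ThreeSubspaces

variable {K V : Type*} [DivisionRing K] [AddCommGroup V] [Module K V] [FiniteDimensional K V]
  {A B C : Submodule K V}

theorem finrank_sup_eq_add_of_inf_eq_bot {D E : Submodule K V} (h : D ⊓ E = ⊥) :
    finrank K ↥(D ⊔ E) = finrank K D + finrank K E := by
  have := finrank_sup_add_finrank_inf_eq D E
  rwa [h, finrank_bot, add_zero] at this

theorem finrank_inf_add_finrank_inf_le (habc : A ⊓ B ⊓ C = ⊥) :
    finrank K ↥(A ⊓ B) + finrank K ↥(A ⊓ C) ≤ finrank K A := by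
  rw [← finrank_sup_eq_add_of_inf_eq_bot (by rw [← habc]; ac_rfl)]
  exact finrank_mono (sup_le inf_le_left inf_le_left)

theorem sup_eq_top_of_inf_inf_eq_bot (habc : A ⊓ B ⊓ C = ⊥)
    (hdim : finrank K A + finrank K B + finrank K C = 2 * finrank K V) : A ⊔ B = ⊤ := by
  -- The three bounds `dim (X ⊓ Y) + dim (X ⊓ Z) ≤ dim X` add up to `∑ dim (X ⊓ Y) ≤ dim V`,
  -- while `dim (X ⊔ Y) ≤ dim V` gives `∑ dim (X ⊓ Y) ≥ dim V`: every inequality is sharp.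
  have hA := finrank_inf_add_finrank_inf_le habc
  have hB := finrank_inf_add_finrank_inf_le (A := B) (B := A) (C := C) (by rwa [inf_comm B])
  have hC := finrank_inf_add_finrank_inf_le (A := C) (B := A) (C := B) (by rw [← habc]; ac_rfl)
  rw [inf_comm B A] at hB
  rw [inf_comm C A, inf_comm C B] at hC
  refine eq_top_of_finrank_eq ?_
  linarith [finrank_sup_add_finrank_inf_eq A B, finrank_sup_add_finrank_inf_eq A C,
    finrank_sup_add_finrank_inf_eq B C, (A ⊔ B).finrank_le, (A ⊔ C).finrank_le,
    (B ⊔ C).finrank_le]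

theorem finrank_inf_add_finrank_eq_of_inf_inf_eq_bot (habc : A ⊓ B ⊓ C = ⊥)
    (hdim : finrank K A + finrank K B + finrank K C = 2 * finrank K V) :
    finrank K ↥(A ⊓ B) + finrank K V = finrank K A + finrank K B ∧
      finrank K ↥(A ⊓ C) + finrank K V = finrank K A + finrank K C ∧
      finrank K ↥(B ⊓ C) + finrank K V = finrank K B + finrank K C := by
  have key {D E : Submodule K V} (h : D ⊔ E = ⊤) :
      finrank K ↥(D ⊓ E) + finrank K V = finrank K D + finrank K E := by
    rw [← finrank_sup_add_finrank_inf_eq, h, finrank_top, add_comm]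
  exact ⟨key (sup_eq_top_of_inf_inf_eq_bot habc hdim),
    key (sup_eq_top_of_inf_inf_eq_bot (C := B) (by rw [← habc]; ac_rfl) (by omega)),
    key (sup_eq_top_of_inf_inf_eq_bot (A := B) (B := C) (C := A) (by rw [← habc]; ac_rfl)
      (by omega))⟩

theorem inf_sup_inf_eq_of_inf_inf_eq_bot (habc : A ⊓ B ⊓ C = ⊥)
    (hdim : finrank K A + finrank K B + finrank K C = 2 * finrank K V) :
    A ⊓ B ⊔ A ⊓ C = A ∧ A ⊓ B ⊔ B ⊓ C = B ∧ A ⊓ C ⊔ B ⊓ C = C := by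
  obtain ⟨hAB, hAC, hBC⟩ := finrank_inf_add_finrank_eq_of_inf_inf_eq_bot habc hdim
  have key {D E X : Submodule K V} (hD : D ≤ X) (hE : E ≤ X) (hDE : D ⊓ E = ⊥)
      (h : finrank K D + finrank K E = finrank K X) : D ⊔ E = X :=
    eq_of_le_of_finrank_eq (sup_le hD hE) (by rw [finrank_sup_eq_add_of_inf_eq_bot hDE, h])
  refine ⟨key inf_le_left inf_le_left ?_ (by omega), key inf_le_right inf_le_left ?_ (by omega),
    key inf_le_right inf_le_right ?_ (by omega)⟩ <;> rw [← habc] <;> ac_rfl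

theorem isInternal_inf_of_inf_inf_eq_bot (habc : A ⊓ B ⊓ C = ⊥)
    (hdim : finrank K A + finrank K B + finrank K C = 2 * finrank K V) :
    DirectSum.IsInternal ![A ⊓ B, A ⊓ C, B ⊓ C] := by
  obtain ⟨hA, hB, hC⟩ := inf_sup_inf_eq_of_inf_inf_eq_bot habc hdim
  refine DirectSum.isInternal_submodule_of_iSupIndep_of_iSup_eq_top
    (iSupIndep_fin_three.2 ⟨?_, ?_, ?_⟩) ?_ <;> simp only [iSup_fin_three, Matrix.cons_val]
  · rw [hC, disjoint_iff, habc]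
  · rw [sup_comm, hB, disjoint_iff, ← habc]; ac_rfl
  · rw [hA, disjoint_iff, ← habc]; ac_rfl
  · rw [hA, eq_top_iff, ← sup_eq_top_of_inf_inf_eq_bot habc hdim]
    conv_lhs => rw [← hB]
    exact sup_le le_sup_left (sup_le (inf_le_left.trans le_sup_left) le_sup_right)

theorem exists_linearEquiv_map_eq_of_inf_inf_eq_bot {A' B' C' : Submodule K V}
    (habc : A ⊓ B ⊓ C = ⊥) (habc' : A' ⊓ B' ⊓ C' = ⊥)
    (hdim : finrank K A + finrank K B + finrank K C = 2 * finrank K V)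
    (hA : finrank K A = finrank K A') (hB : finrank K B = finrank K B')
    (hC : finrank K C = finrank K C') :
    ∃ φ : V ≃ₗ[K] V, A.map (φ : V →ₗ[K] V) = A' ∧ B.map (φ : V →ₗ[K] V) = B' ∧
      C.map (φ : V →ₗ[K] V) = C' := by
  have hdim' : finrank K A' + finrank K B' + finrank K C' = 2 * finrank K V := by omega
  obtain ⟨hAB, hAC, hBC⟩ := finrank_inf_add_finrank_eq_of_inf_inf_eq_bot habc hdim
  obtain ⟨hAB', hAC', hBC'⟩ := finrank_inf_add_finrank_eq_of_inf_inf_eq_bot habc' hdim'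
  have dAB : finrank K ↥(A ⊓ B) = finrank K ↥(A' ⊓ B') := by omega
  have dAC : finrank K ↥(A ⊓ C) = finrank K ↥(A' ⊓ C') := by omega
  have dBC : finrank K ↥(B ⊓ C) = finrank K ↥(B' ⊓ C') := by omega
  obtain ⟨φ, hφ⟩ := (isInternal_inf_of_inf_inf_eq_bot habc hdim).exists_linearEquiv_map_eq
    (isInternal_inf_of_inf_inf_eq_bot habc' hdim') fun i =>
      LinearEquiv.ofFinrankEq _ _ (by fin_cases i; exacts [dAB, dAC, dBC])
  obtain ⟨sA, sB, sC⟩ := inf_sup_inf_eq_of_inf_inf_eq_bot habc hdim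
  obtain ⟨sA', sB', sC'⟩ := inf_sup_inf_eq_of_inf_inf_eq_bot habc' hdim'
  refine ⟨φ, ?_, ?_, ?_⟩
  · rw [← sA, ← sA', Submodule.map_sup]; exact congr_arg₂ (· ⊔ ·) (hφ 0) (hφ 1)
  · rw [← sB, ← sB', Submodule.map_sup]; exact congr_arg₂ (· ⊔ ·) (hφ 0) (hφ 2)
  · rw [← sC, ← sC', Submodule.map_sup]; exact congr_arg₂ (· ⊔ ·) (hφ 1) (hφ 2)

end ThreeSubspaces

section Arms

variable {K m n : Type*} [Field K] [Fintype m] [DecidableEq m] [Fintype n] [DecidableEq n]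

theorem LinearEquiv.isUnit_toMatrix' (φ : (n → K) ≃ₗ[K] (n → K)) :
    IsUnit (LinearMap.toMatrix' (φ : (n → K) →ₗ[K] (n → K))) :=
  mulVec_injective_iff_isUnit.1 <| by
    simpa only [funext (LinearMap.toMatrix'_mulVec _), LinearEquiv.coe_coe] using φ.injective

theorem exists_eq_toMatrix'_mul_mul_inv {M M' : Matrix n m K}
    (hM : Function.Injective (toLin' M)) (hM' : Function.Injective (toLin' M'))
    (φ : (n → K) ≃ₗ[K] (n → K))
    (hφ : (LinearMap.range (toLin' M)).map (φ : (n → K) →ₗ[K] (n → K)) =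
      LinearMap.range (toLin' M')) :
    ∃ g : (Matrix m m K)ˣ, M' = LinearMap.toMatrix' (φ : (n → K) →ₗ[K] (n → K)) * M *
      ((g⁻¹ : (Matrix m m K)ˣ) : Matrix m m K) := by
  let ψ : (m → K) ≃ₗ[K] (m → K) := LinearEquiv.ofInjective _ hM ≪≫ₗ φ.submoduleMap _ ≪≫ₗ
    LinearEquiv.ofEq _ _ hφ ≪≫ₗ (LinearEquiv.ofInjective _ hM').symm
  have hψ : toLin' M' ∘ₗ (ψ : (m → K) →ₗ[K] (m → K)) =
      (φ : (n → K) →ₗ[K] (n → K)) ∘ₗ toLin' M := by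
    refine LinearMap.ext fun a => ?_
    simp only [ψ, LinearMap.comp_apply, LinearEquiv.coe_coe, LinearEquiv.trans_apply]
    rw [← LinearEquiv.ofInjective_apply (h := hM'), LinearEquiv.apply_symm_apply]
    rfl
  have hg := congr_arg LinearMap.toMatrix' hψ
  rw [LinearMap.toMatrix'_comp, LinearMap.toMatrix'_comp, LinearMap.toMatrix'_toLin',
    LinearMap.toMatrix'_toLin', ← ψ.isUnit_toMatrix'.unit_spec] at hg
  refine ⟨ψ.isUnit_toMatrix'.unit, ?_⟩
  rw [← hg, Matrix.mul_assoc, Units.mul_inv, Matrix.mul_one]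

end Arms

section D4

variable {β₁ β₂ β₃ β₄ : ℕ} {h : β₁ + β₂ + β₃ = 2 * β₄} {X : Matrix (Fin β₄) (Fin β₁) ℂ}
  {Y : Matrix (Fin β₄) (Fin β₂) ℂ} {Z : Matrix (Fin β₄) (Fin β₃) ℂ}

theorem d4BlockMat10_mulVec (a : Fin β₁ → ℂ) (b : Fin β₂ → ℂ) (c : Fin β₃ → ℂ) :
    d4BlockMat10 X Y Z *ᵥ Sum.elim a (Sum.elim b c) =
      Sum.elim (X *ᵥ a + Y *ᵥ b) (Y *ᵥ b + Z *ᵥ c) := by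
  simp [d4BlockMat10, fromBlocks_mulVec]

theorem eq_zero_of_d4Det10_ne_zero (hd : d4Det10 h X Y Z ≠ 0) {a : Fin β₁ → ℂ}
    {b : Fin β₂ → ℂ} {c : Fin β₃ → ℂ} (hXY : X *ᵥ a + Y *ᵥ b = 0)
    (hYZ : Y *ᵥ b + Z *ᵥ c = 0) : a = 0 ∧ b = 0 ∧ c = 0 := by
  have hw : Sum.elim a (Sum.elim b c) ∘ d4Equiv10 h = 0 := by
    refine eq_zero_of_mulVec_eq_zero hd ?_
    rw [submatrix_mulVec_equiv, Function.comp_assoc, Equiv.self_comp_symm, Function.comp_id,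
      Function.comp_id, d4BlockMat10_mulVec, hXY, hYZ, Sum.elim_zero_zero]
  have hw' : Sum.elim a (Sum.elim b c) = 0 :=
    (d4Equiv10 h).surjective.injective_comp_right (hw.trans (Function.const_comp ..).symm)
  rwa [← Sum.elim_zero_zero, ← Sum.elim_zero_zero, Sum.elim_eq_iff, Sum.elim_eq_iff] at hw'

theorem injective_toLin'_of_d4Det10_ne_zero (hd : d4Det10 h X Y Z ≠ 0) :
    Function.Injective (toLin' X) ∧ Function.Injective (toLin' Y) ∧
      Function.Injective (toLin' Z) := by
  simp only [← LinearMap.ker_eq_bot, LinearMap.ker_eq_bot', toLin'_apply]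
  refine ⟨fun a ha => ?_, fun b hb => ?_, fun c hc => ?_⟩
  · exact (eq_zero_of_d4Det10_ne_zero hd (b := 0) (c := 0) (by simp [ha]) (by simp)).1
  · exact (eq_zero_of_d4Det10_ne_zero hd (a := 0) (c := 0) (by simp [hb]) (by simp [hb])).2.1
  · exact (eq_zero_of_d4Det10_ne_zero hd (a := 0) (b := 0) (by simp) (by simp [hc])).2.2

theorem range_inf_range_inf_range_eq_bot_of_d4Det10_ne_zero (hd : d4Det10 h X Y Z ≠ 0) :
    LinearMap.range (toLin' X) ⊓ LinearMap.range (toLin' Y) ⊓ LinearMap.range (toLin' Z) = ⊥ := by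
  refine eq_bot_iff.2 ?_
  rintro _ ⟨⟨⟨a, rfl⟩, ⟨b, hb⟩⟩, ⟨c, hc⟩⟩
  simp only [toLin'_apply] at hb hc ⊢
  obtain ⟨rfl, -, -⟩ := eq_zero_of_d4Det10_ne_zero hd (a := a) (b := -b) (c := c)
    (by rw [mulVec_neg, hb, add_neg_cancel]) (by rw [mulVec_neg, hb, hc, neg_add_cancel])
  simp

end D4

theorem d4_nonvanishing_single_orbit_general (β₁ β₂ β₃ β₄ : ℕ)
    (h : β₁ + β₂ + β₃ = 2 * β₄)
    (X X' : Matrix (Fin β₄) (Fin β₁) ℂ) (Y Y' : Matrix (Fin β₄) (Fin β₂) ℂ)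
    (Z Z' : Matrix (Fin β₄) (Fin β₃) ℂ)
    (hXYZ : d4Det10 h X Y Z ≠ 0) (hXYZ' : d4Det10 h X' Y' Z' ≠ 0) :
    ∃ (g₁ : (Matrix (Fin β₁) (Fin β₁) ℂ)ˣ) (g₂ : (Matrix (Fin β₂) (Fin β₂) ℂ)ˣ)
      (g₃ : (Matrix (Fin β₃) (Fin β₃) ℂ)ˣ) (g₄ : (Matrix (Fin β₄) (Fin β₄) ℂ)ˣ),
      X' = (g₄ : Matrix (Fin β₄) (Fin β₄) ℂ) * X * ((g₁⁻¹ : _ˣ) : Matrix (Fin β₁) (Fin β₁) ℂ) ∧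
      Y' = (g₄ : Matrix (Fin β₄) (Fin β₄) ℂ) * Y * ((g₂⁻¹ : _ˣ) : Matrix (Fin β₂) (Fin β₂) ℂ) ∧
      Z' = (g₄ : Matrix (Fin β₄) (Fin β₄) ℂ) * Z * ((g₃⁻¹ : _ˣ) : Matrix (Fin β₃) (Fin β₃) ℂ) := by
  obtain ⟨hX, hY, hZ⟩ := injective_toLin'_of_d4Det10_ne_zero hXYZ
  obtain ⟨hX', hY', hZ'⟩ := injective_toLin'_of_d4Det10_ne_zero hXYZ'
  have finrank_range {m : ℕ} {M : Matrix (Fin β₄) (Fin m) ℂ} (hM : Function.Injective (toLin' M)) :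
      finrank ℂ (LinearMap.range (toLin' M)) = m := by
    rw [LinearMap.finrank_range_of_inj hM, finrank_fin_fun]
  obtain ⟨φ, hφX, hφY, hφZ⟩ := exists_linearEquiv_map_eq_of_inf_inf_eq_bot
    (range_inf_range_inf_range_eq_bot_of_d4Det10_ne_zero hXYZ)
    (range_inf_range_inf_range_eq_bot_of_d4Det10_ne_zero hXYZ')
    (by rw [finrank_range hX, finrank_range hY, finrank_range hZ, finrank_fin_fun, h])
    (by rw [finrank_range hX, finrank_range hX']) (by rw [finrank_range hY, finrank_range hY'])
    (by rw [finrank_range hZ, finrank_range hZ'])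
  obtain ⟨g₁, hg₁⟩ := exists_eq_toMatrix'_mul_mul_inv hX hX' φ hφX
  obtain ⟨g₂, hg₂⟩ := exists_eq_toMatrix'_mul_mul_inv hY hY' φ hφY
  obtain ⟨g₃, hg₃⟩ := exists_eq_toMatrix'_mul_mul_inv hZ hZ' φ hφZ
  exact ⟨g₁, g₂, g₃, φ.isUnit_toMatrix'.unit, hg₁, hg₂, hg₃⟩

/-- The complement of the zero locus of the D4 quiver semi-invariant is a single
orbit of `GL(β₁) × GL(β₂) × GL(β₃) × GL(β₄)`. -/
theorem d4_nonvanishing_single_orbit (β₁ β₂ β₃ β₄ : ℕ)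
    (hβ₁ : 0 < β₁) (hβ₂ : 0 < β₂) (hβ₃ : 0 < β₃) (hβ₄ : 0 < β₄)
    (h : β₁ + β₂ + β₃ = 2 * β₄)
    (X X' : Matrix (Fin β₄) (Fin β₁) ℂ) (Y Y' : Matrix (Fin β₄) (Fin β₂) ℂ)
    (Z Z' : Matrix (Fin β₄) (Fin β₃) ℂ)
    (hXYZ : d4Det10 h X Y Z ≠ 0) (hXYZ' : d4Det10 h X' Y' Z' ≠ 0) :
    ∃ (g₁ : (Matrix (Fin β₁) (Fin β₁) ℂ)ˣ) (g₂ : (Matrix (Fin β₂) (Fin β₂) ℂ)ˣ)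
      (g₃ : (Matrix (Fin β₃) (Fin β₃) ℂ)ˣ) (g₄ : (Matrix (Fin β₄) (Fin β₄) ℂ)ˣ),
      X' = (g₄ : Matrix (Fin β₄) (Fin β₄) ℂ) * X * ((g₁⁻¹ : _ˣ) : Matrix (Fin β₁) (Fin β₁) ℂ) ∧
      Y' = (g₄ : Matrix (Fin β₄) (Fin β₄) ℂ) * Y * ((g₂⁻¹ : _ˣ) : Matrix (Fin β₂) (Fin β₂) ℂ) ∧
      Z' = (g₄ : Matrix (Fin β₄) (Fin β₄) ℂ) * Z * ((g₃⁻¹ : _ˣ) : Matrix (Fin β₃) (Fin β₃) ℂ) :=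
  d4_nonvanishing_single_orbit_general β₁ β₂ β₃ β₄ h X X' Y Y' Z Z' hXYZ hXYZ'
end

section
/- First factor in the multiplicity-one decomposition of the b-function of the binary cubic discriminant: there exists a nonzero constant c, independent of s, such that for every natural number s, [ (6∂₀∂₂ - 2∂₁²)∘M_{x₀x₂-x₁²} + (6∂₁∂₃ - 2∂₂²)∘M_{x₁x₃-x₂²} + (9∂₀∂₃ - ∂₁∂₂)∘M_{x₀x₃-x₁x₂} ]·f^{s} = c·(s+1)(6s+5)·f^{s}. -/
open MvPolynomial

/-- The partial-derivative operator `∂ᵢ` as a linear endomorphism of `ℂ[x₀,x₁,x₂,x₃]`. -/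
noncomputable def pd11 (i : Fin 4) : Module.End ℂ (MvPolynomial (Fin 4) ℂ) :=
  (pderiv i).toLinearMap

/-- The discriminant of the binary cubic form:
`f = 3x₁²x₂² - 4x₀x₂³ - 4x₁³x₃ - x₀²x₃² + 6x₀x₁x₂x₃`. -/
noncomputable def disc11 : MvPolynomial (Fin 4) ℂ :=
  3 * X 1 ^ 2 * X 2 ^ 2 - 4 * X 0 * X 2 ^ 3 - 4 * X 1 ^ 3 * X 3
    - X 0 ^ 2 * X 3 ^ 2 + 6 * X 0 * X 1 * X 2 * X 3

/-- The operator
`(6∂₀∂₂ - 2∂₁²)∘M_{x₀x₂-x₁²} + (6∂₁∂₃ - 2∂₂²)∘M_{x₁x₃-x₂²} + (9∂₀∂₃ - ∂₁∂₂)∘M_{x₀x₃-x₁x₂}`,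
where `M_g` is multiplication by `g`. -/
noncomputable def op11 : Module.End ℂ (MvPolynomial (Fin 4) ℂ) :=
  ((6 : ℂ) • (pd11 0 * pd11 2) - (2 : ℂ) • (pd11 1 * pd11 1)) *
      LinearMap.mulLeft ℂ (X 0 * X 2 - X 1 ^ 2) +
    ((6 : ℂ) • (pd11 1 * pd11 3) - (2 : ℂ) • (pd11 2 * pd11 2)) *
      LinearMap.mulLeft ℂ (X 1 * X 3 - X 2 ^ 2) +
    ((9 : ℂ) • (pd11 0 * pd11 3) - pd11 1 * pd11 2) *
      LinearMap.mulLeft ℂ (X 0 * X 3 - X 1 * X 2)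

lemma pderiv_ofNat' (i : Fin 4) (k : ℕ) [k.AtLeastTwo] :
    pderiv i (OfNat.ofNat k : MvPolynomial (Fin 4) ℂ) = 0 := by
  simpa using Derivation.map_natCast (pderiv i) (OfNat.ofNat k : ℕ)

lemma op11_apply (p : MvPolynomial (Fin 4) ℂ) : op11 p =
    (6:ℂ) • pderiv 0 (pderiv 2 ((X 0 * X 2 - X 1^2) * p))
      - (2:ℂ) • pderiv 1 (pderiv 1 ((X 0 * X 2 - X 1^2) * p))
    + ((6:ℂ) • pderiv 1 (pderiv 3 ((X 1 * X 3 - X 2^2) * p))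
      - (2:ℂ) • pderiv 2 (pderiv 2 ((X 1 * X 3 - X 2^2) * p)))
    + ((9:ℂ) • pderiv 0 (pderiv 3 ((X 0 * X 3 - X 1 * X 2) * p))
      - pderiv 1 (pderiv 2 ((X 0 * X 3 - X 1 * X 2) * p))) := by
  simp [op11, pd11, LinearMap.add_apply, LinearMap.sub_apply, Module.End.mul_apply,
    LinearMap.smul_apply, LinearMap.mulLeft_apply]

lemma step11 (g : MvPolynomial (Fin 4) ℂ) (i j : Fin 4) (n : ℕ) :
    pderiv i (pderiv j (g * disc11 ^ (n+2))) =
      pderiv i (pderiv j g) * disc11 ^ (n+2)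
      + ((n:MvPolynomial (Fin 4) ℂ)+2) * ((pderiv j g * pderiv i disc11
          + pderiv i g * pderiv j disc11 + g * pderiv i (pderiv j disc11)) * disc11 ^ (n+1))
      + (((n:MvPolynomial (Fin 4) ℂ)+2)*((n:MvPolynomial (Fin 4) ℂ)+1))
          * ((g * (pderiv i disc11 * pderiv j disc11)) * disc11 ^ n) := by
  simp only [pderiv_mul, pderiv_pow, map_add, Nat.add_sub_cancel, Derivation.map_natCast]
  push_cast
  ring

lemma d0' : pderiv (0 : Fin 4) disc11 = -4*X 2^3 - 2*X 0*X 3^2 + 6*X 1*X 2*X 3 := by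
  simp [disc11, pderiv_mul, pderiv_pow, pderiv_X_self, pderiv_X_of_ne,
    pderiv_ofNat' 0 3, pderiv_ofNat' 0 4, pderiv_ofNat' 0 6]
  ring
lemma d1' : pderiv (1 : Fin 4) disc11 = 6*X 1*X 2^2 - 12*X 1^2*X 3 + 6*X 0*X 2*X 3 := by
  simp [disc11, pderiv_mul, pderiv_pow, pderiv_X_self, pderiv_X_of_ne,
    pderiv_ofNat' 1 3, pderiv_ofNat' 1 4, pderiv_ofNat' 1 6]
  ring
lemma d2' : pderiv (2 : Fin 4) disc11 = 6*X 1^2*X 2 - 12*X 0*X 2^2 + 6*X 0*X 1*X 3 := by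
  simp [disc11, pderiv_mul, pderiv_pow, pderiv_X_self, pderiv_X_of_ne,
    pderiv_ofNat' 2 3, pderiv_ofNat' 2 4, pderiv_ofNat' 2 6]
  ring
lemma d3' : pderiv (3 : Fin 4) disc11 = -4*X 1^3 - 2*X 0^2*X 3 + 6*X 0*X 1*X 2 := by
  simp [disc11, pderiv_mul, pderiv_pow, pderiv_X_self, pderiv_X_of_ne,
    pderiv_ofNat' 3 3, pderiv_ofNat' 3 4, pderiv_ofNat' 3 6]
  ring

set_option maxHeartbeats 4000000 in
/-- First factor in the multiplicity-one decomposition of the b-function of the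
binary cubic discriminant: there is a nonzero constant `c`, independent of `s`,
with `op·f^s = c·(s+1)(6s+5)·f^s` for all `s ∈ ℕ`. -/
theorem binary_cubic_first_factor :
    ∃ c : ℂ, c ≠ 0 ∧ ∀ s : ℕ,
      op11 (disc11 ^ s) = (c * ((s : ℂ) + 1) * (6 * (s : ℂ) + 5)) • disc11 ^ s := by
  refine ⟨6, by norm_num, fun s => ?_⟩
  rw [op11_apply]
  match s with
  | 0 =>
    simp only [pow_zero, mul_one]
    simp [pderiv_mul, pderiv_pow, pderiv_X_self, pderiv_X_of_ne,
      pderiv_ofNat' 0 2, pderiv_ofNat' 1 2, pderiv_ofNat' 2 2, pderiv_ofNat' 3 2,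
      smul_eq_C_mul]
    simp only [map_ofNat]
    norm_num
  | 1 =>
    simp only [pow_one]
    simp only [pderiv_mul, map_add, d0', d1', d2', d3']
    simp [pderiv_mul, pderiv_pow, pderiv_X_self, pderiv_X_of_ne,
      pderiv_ofNat' 0 2, pderiv_ofNat' 1 2, pderiv_ofNat' 2 2, pderiv_ofNat' 3 2,
      pderiv_ofNat' 0 4, pderiv_ofNat' 1 4, pderiv_ofNat' 2 4, pderiv_ofNat' 3 4,
      pderiv_ofNat' 0 6, pderiv_ofNat' 1 6, pderiv_ofNat' 2 6, pderiv_ofNat' 3 6,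
      pderiv_ofNat' 0 12, pderiv_ofNat' 1 12, pderiv_ofNat' 2 12, pderiv_ofNat' 3 12,
      smul_eq_C_mul, map_ofNat, disc11]
    ring
  | (n+2) =>
    simp only [step11, d0', d1', d2', d3']
    simp [pderiv_mul, pderiv_pow, pderiv_X_self, pderiv_X_of_ne,
      pderiv_ofNat' 0 2, pderiv_ofNat' 1 2, pderiv_ofNat' 2 2, pderiv_ofNat' 3 2,
      pderiv_ofNat' 0 4, pderiv_ofNat' 1 4, pderiv_ofNat' 2 4, pderiv_ofNat' 3 4,
      pderiv_ofNat' 0 6, pderiv_ofNat' 1 6, pderiv_ofNat' 2 6, pderiv_ofNat' 3 6,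
      pderiv_ofNat' 0 12, pderiv_ofNat' 1 12, pderiv_ofNat' 2 12, pderiv_ofNat' 3 12,
      smul_eq_C_mul, map_ofNat, C_eq_coe_nat, disc11]
    ring
end
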